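/- Let d ≥ 3 and θ > 0. Let 𝒬 be a family of cubes satisfying (G), and let ω : ℝ^d → ℝ be measurable with 0 < δ ≤ ω(x) ≤ 1 for all x and some δ > 0. There is a constant C > 0, depending only on d, θ and δ, such that every function 𝔞 for which there exist Q ∈ 𝒬 and a cube K ⊆ Q** with supp 𝔞 ⊆ K, 4 d_K ≥ d_Q, and ‖𝔞‖_∞ ≤ |K|^{-1}, belongs to H¹_at(𝒜_{ω,𝒬}) with ‖𝔞‖_{H¹_at(𝒜_{ω,𝒬})} ≤ C. -/

import Mathlib

/-!
Subtract from `𝔞` the multiple `μ |Q|⁻¹ χ_Q` of the type-(ii) atom that carries the same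
`ω`-weighted mass: `μ = (∫ 𝔞 ω) / (|Q|⁻¹ ∫_Q ω)`. Since `|∫ 𝔞 ω| ≤ ‖𝔞‖₁ ≤ 1` and
`|Q|⁻¹ ∫_Q ω ≥ δ`, we get `|μ| ≤ δ⁻¹`. The difference has vanishing `ω`-integral, is supported
in `Q**`, and is bounded by `|K|⁻¹ + δ⁻¹ |Q|⁻¹ ≤ (4^d + δ⁻¹) (1+θ)^{2d} |Q**|⁻¹` because
`d_Q ≤ 4 d_K`; so after normalisation it is a type-(i) atom on `Q**`.
-/

open MeasureTheory Filter
open scoped ENNReal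

noncomputable section

/-- `ℝ^d` as a Euclidean space. -/
abbrev Rd (d : ℕ) := EuclideanSpace ℝ (Fin d)

/-- A cube in `ℝ^d`, given by its center and (positive) radius. -/
structure Cube (d : ℕ) where
  center : Rd d
  radius : ℝ
  radius_pos : 0 < radius

/-- The underlying open set of a cube: `Q(c,r) = {y : max_i |c_i - y_i| < r}`. -/
def Cube.carrier {d : ℕ} (Q : Cube d) : Set (Rd d) :=
  {y | ∀ i, |Q.center i - y i| < Q.radius}

/-- The diameter `d_Q = 2 √d · r_Q` of a cube. -/
def Cube.diam {d : ℕ} (Q : Cube d) : ℝ := 2 * Real.sqrt d * Q.radius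

/-- The `k`-fold enlargement `Q^{*k} = Q(c_Q, (1+θ)^k r_Q)` of a cube, as a set. -/
def Cube.starSet {d : ℕ} (Q : Cube d) (θ : ℝ) (k : ℕ) : Set (Rd d) :=
  {y | ∀ i, |Q.center i - y i| < (1 + θ) ^ k * Q.radius}

/-- The condition (G) on a family of cubes: it is countable, the closures cover `ℝ^d`,
distinct cubes overlap in measure zero, and cubes whose fourfold enlargements meet have
comparable diameters (with constant `CG`). -/
def SatG {d : ℕ} (θ CG : ℝ) (𝒬 : Set (Cube d)) : Prop :=
  𝒬.Countable ∧
  (⋃ Q ∈ 𝒬, closure Q.carrier) = Set.univ ∧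
  (∀ Q₁ ∈ 𝒬, ∀ Q₂ ∈ 𝒬, Q₁ ≠ Q₂ → volume (Q₁.carrier ∩ Q₂.carrier) = 0) ∧
  (∀ Q₁ ∈ 𝒬, ∀ Q₂ ∈ 𝒬, (Q₁.starSet θ 4 ∩ Q₂.starSet θ 4).Nonempty →
    CG⁻¹ * Q₁.diam ≤ Q₂.diam ∧ Q₂.diam ≤ CG * Q₁.diam)

/-- An `(ω,𝒬)`-atom: either a function supported in a cube `K ⊆ Q^{**}` (`Q ∈ 𝒬`) with
`‖a‖_∞ ≤ |K|⁻¹` and `∫_K a ω = 0`, or `a = |Q|⁻¹ χ_Q` for some `Q ∈ 𝒬`.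
Taking `ω ≡ 1` gives the notion of a `𝒬`-atom. -/
def IsWAtom {d : ℕ} (θ : ℝ) (𝒬 : Set (Cube d)) (ω : Rd d → ℝ) (a : Rd d → ℝ) : Prop :=
  Integrable a ∧
  ((∃ Q ∈ 𝒬, ∃ K : Cube d, K.carrier ⊆ Q.starSet θ 2 ∧
      Function.support a ⊆ K.carrier ∧
      (∀ᵐ x ∂volume, |a x| ≤ ((volume K.carrier).toReal)⁻¹) ∧
      ∫ x in K.carrier, a x * ω x = 0) ∨
    (∃ Q ∈ 𝒬, a = (Q.carrier).indicator (fun _ => ((volume Q.carrier).toReal)⁻¹)))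

/-- `f = ∑ λ_j a_j` is an atomic decomposition: all `a_j` are atoms (i.e. satisfy `𝒜`),
`∑ |λ_j| < ∞`, and the partial sums converge to `f` in `L¹`. -/
def IsDecomp {d : ℕ} (𝒜 : (Rd d → ℝ) → Prop) (f : Rd d → ℝ)
    (lam : ℕ → ℝ) (a : ℕ → Rd d → ℝ) : Prop :=
  (∀ j, 𝒜 (a j)) ∧ Summable (fun j => |lam j|) ∧
  Tendsto (fun N => ∫ x, |f x - ∑ j ∈ Finset.range N, lam j * a j x|) atTop (nhds 0)

/-- Membership in the atomic Hardy space `H¹_at(𝒜)`. -/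
def MemH1at {d : ℕ} (𝒜 : (Rd d → ℝ) → Prop) (f : Rd d → ℝ) : Prop :=
  ∃ lam a, IsDecomp 𝒜 f lam a

/-- The atomic norm `‖f‖_{H¹_at(𝒜)} = inf ∑ |λ_j|` over all atomic decompositions. -/
def H1atNorm {d : ℕ} (𝒜 : (Rd d → ℝ) → Prop) (f : Rd d → ℝ) : ℝ :=
  sInf {s | ∃ lam a, IsDecomp 𝒜 f lam a ∧ s = ∑' j, |lam j|}

open Function

section Cancellation

variable {α : Type*} [MeasurableSpace α] {μ : Measure α}

lemma integral_sub_div_smul_mul_eq_zero {f g ω : α → ℝ}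
    (hf : Integrable (fun x => f x * ω x) μ) (hg : Integrable (fun x => g x * ω x) μ)
    (hg₀ : ∫ x, g x * ω x ∂μ ≠ 0) :
    ∫ x, (f - ((∫ x, f x * ω x ∂μ) / ∫ x, g x * ω x ∂μ) • g) x * ω x ∂μ = 0 := by
  simp only [Pi.sub_apply, Pi.smul_apply, smul_eq_mul, sub_mul, mul_assoc]
  rw [integral_sub hf (hg.const_mul _), integral_const_mul, div_mul_cancel₀ _ hg₀, sub_self]

end Cancellation

namespace Cube

variable {d : ℕ}

lemma carrier_eq_preimage (Q : Cube d) :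
    Q.carrier = (MeasurableEquiv.toLp 2 (Fin d → ℝ)).symm ⁻¹'
      Set.univ.pi fun i => Set.Ioo (Q.center i - Q.radius) (Q.center i + Q.radius) := by
  ext y
  simp only [carrier, Set.mem_preimage, Set.mem_pi, Set.mem_univ, Set.mem_Ioo, forall_const]
  exact forall_congr' fun i => by
    simp only [MeasurableEquiv.toLp_symm_apply, abs_sub_lt_iff]
    constructor <;> rintro ⟨h₁, h₂⟩ <;> constructor <;> linarith

lemma measurableSet_carrier (Q : Cube d) : MeasurableSet Q.carrier := by
  rw [carrier_eq_preimage]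
  exact (MeasurableEquiv.toLp 2 (Fin d → ℝ)).symm.measurable
    (MeasurableSet.univ_pi fun _ => measurableSet_Ioo)

lemma volume_carrier (Q : Cube d) : volume Q.carrier = ENNReal.ofReal ((2 * Q.radius) ^ d) := by
  rw [carrier_eq_preimage,
    (EuclideanSpace.volume_preserving_symm_measurableEquiv_toLp (Fin d)).measure_preimage
      (MeasurableSet.univ_pi fun _ => measurableSet_Ioo).nullMeasurableSet,
    volume_pi_pi]
  simp only [Real.volume_Ioo, add_sub_sub_cancel, ← two_mul, Finset.prod_const, Finset.card_univ,
    Fintype.card_fin, ENNReal.ofReal_pow (by linarith [Q.radius_pos] : 0 ≤ 2 * Q.radius)]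

lemma volume_carrier_ne_top (Q : Cube d) : volume Q.carrier ≠ ⊤ := by
  rw [volume_carrier]
  exact ENNReal.ofReal_ne_top

lemma toReal_volume_carrier (Q : Cube d) : (volume Q.carrier).toReal = (2 * Q.radius) ^ d := by
  rw [volume_carrier, ENNReal.toReal_ofReal (pow_nonneg (by linarith [Q.radius_pos]) _)]

lemma toReal_volume_carrier_pos (Q : Cube d) : 0 < (volume Q.carrier).toReal := by
  rw [toReal_volume_carrier]
  exact pow_pos (by linarith [Q.radius_pos]) _

lemma inv_toReal_volume_le_of_diam_le {Q K : Cube d} {c : ℝ}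
    (h : Q.diam ≤ c * K.diam) :
    (volume K.carrier).toReal⁻¹ ≤ c ^ d * (volume Q.carrier).toReal⁻¹ := by
  rcases d.eq_zero_or_pos with rfl | hd
  · simp [toReal_volume_carrier]
  have hr : Q.radius ≤ c * K.radius := by
    have : 0 < 2 * Real.sqrt d := by positivity
    simp only [diam] at h
    nlinarith
  rw [← div_eq_mul_inv, le_div_iff₀ (toReal_volume_carrier_pos Q), toReal_volume_carrier,
    toReal_volume_carrier, ← div_eq_inv_mul, div_le_iff₀ (pow_pos (by linarith [K.radius_pos]) _),
    ← mul_pow]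
  exact pow_le_pow_left₀ (by linarith [Q.radius_pos]) (by linarith) d

/-- `Q.starSet θ k` is, by definition, the carrier of `Q.scale ((1 + θ) ^ k) _`. -/
def scale (Q : Cube d) (s : ℝ) (hs : 0 < s) : Cube d :=
  ⟨Q.center, s * Q.radius, mul_pos hs Q.radius_pos⟩

lemma carrier_subset_scale (Q : Cube d) {s : ℝ} (hs : 1 ≤ s) :
    Q.carrier ⊆ (Q.scale s (by linarith)).carrier := fun _ hy i =>
  (hy i).trans_le (le_mul_of_one_le_left Q.radius_pos.le hs)

lemma toReal_volume_scale (Q : Cube d) {s : ℝ} (hs : 0 < s) :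
    (volume (Q.scale s hs).carrier).toReal = s ^ d * (volume Q.carrier).toReal := by
  rw [toReal_volume_carrier, toReal_volume_carrier, ← mul_pow]
  simp only [scale]
  ring

def normalizedIndicator (Q : Cube d) : Rd d → ℝ :=
  Q.carrier.indicator fun _ => (volume Q.carrier).toReal⁻¹

lemma integrable_normalizedIndicator (Q : Cube d) : Integrable Q.normalizedIndicator :=
  (integrable_indicator_iff Q.measurableSet_carrier).2
    (integrableOn_const Q.volume_carrier_ne_top)

lemma abs_normalizedIndicator_le (Q : Cube d) (x : Rd d) :
    |Q.normalizedIndicator x| ≤ (volume Q.carrier).toReal⁻¹ := by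
  have := Q.toReal_volume_carrier_pos
  by_cases hx : x ∈ Q.carrier <;>
    simp [normalizedIndicator, hx, this.le]

lemma integral_normalizedIndicator_mul (Q : Cube d) (ω : Rd d → ℝ) :
    ∫ x, Q.normalizedIndicator x * ω x =
      (volume Q.carrier).toReal⁻¹ * ∫ x in Q.carrier, ω x := by
  have : (fun x => Q.normalizedIndicator x * ω x) =
      Q.carrier.indicator fun x => (volume Q.carrier).toReal⁻¹ * ω x := by
    ext x
    by_cases hx : x ∈ Q.carrier <;> simp [normalizedIndicator, hx]
  rw [this, integral_indicator Q.measurableSet_carrier, integral_const_mul]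

lemma le_integral_normalizedIndicator_mul (Q : Cube d) {ω : Rd d → ℝ} {δ : ℝ}
    (hω : IntegrableOn ω Q.carrier) (hδω : ∀ x, δ ≤ ω x) :
    δ ≤ ∫ x, Q.normalizedIndicator x * ω x := by
  have hQ := Q.toReal_volume_carrier_pos
  have hmono : δ * (volume Q.carrier).toReal ≤ ∫ x in Q.carrier, ω x := by
    have := setIntegral_mono_on (integrableOn_const Q.volume_carrier_ne_top) hω
      Q.measurableSet_carrier fun x _ => hδω x
    rwa [setIntegral_const, smul_eq_mul, mul_comm, measureReal_def] at this
  rw [integral_normalizedIndicator_mul, inv_mul_eq_div, le_div_iff₀ hQ]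
  exact hmono

lemma integrable_of_support_subset (K : Cube d) {f : Rd d → ℝ} {M : ℝ}
    (hf : AEStronglyMeasurable f) (hs : support f ⊆ K.carrier) (hb : ∀ᵐ x, |f x| ≤ M) :
    Integrable f :=
  (integrableOn_iff_integrable_of_support_subset hs).1 <|
    Measure.integrableOn_of_bounded K.volume_carrier_ne_top hf (ae_restrict_of_ae hb)

lemma support_sub_smul_normalizedIndicator_subset (Q : Cube d) {s : ℝ} (hs : 1 ≤ s)
    {f : Rd d → ℝ} (hf : support f ⊆ (Q.scale s (by linarith)).carrier) (μ : ℝ) :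
    support (f - μ • Q.normalizedIndicator) ⊆ (Q.scale s (by linarith)).carrier :=
  (support_sub _ _).trans <| Set.union_subset hf <|
    (support_const_smul_subset _ _).trans <| Set.support_indicator_subset.trans <|
      Q.carrier_subset_scale hs

lemma abs_sub_mul_normalizedIndicator_le {Q K : Cube d} {c : ℝ} (h : Q.diam ≤ c * K.diam)
    {s : ℝ} (hs : 0 < s) {y μ M : ℝ} (hy : |y| ≤ (volume K.carrier).toReal⁻¹) (hμ : |μ| ≤ M)
    (x : Rd d) :
    |y - μ * Q.normalizedIndicator x| ≤
      (c ^ d + M) * s ^ d * (volume (Q.scale s hs).carrier).toReal⁻¹ := calc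
  _ ≤ |y| + |μ| * |Q.normalizedIndicator x| := by rw [← abs_mul]; exact abs_sub _ _
  _ ≤ c ^ d * (volume Q.carrier).toReal⁻¹ + M * (volume Q.carrier).toReal⁻¹ :=
    add_le_add (hy.trans (inv_toReal_volume_le_of_diam_le h))
      (mul_le_mul hμ (Q.abs_normalizedIndicator_le x) (abs_nonneg _) ((abs_nonneg _).trans hμ))
  _ = _ := by
    rw [toReal_volume_scale, mul_inv, mul_assoc, mul_inv_cancel_left₀ (pow_pos hs d).ne', add_mul]

lemma abs_integral_mul_le_one (K : Cube d) {f ω : Rd d → ℝ} (hs : support f ⊆ K.carrier)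
    (hb : ∀ᵐ x, |f x| ≤ (volume K.carrier).toReal⁻¹) (hω : ∀ x, |ω x| ≤ 1) :
    |∫ x, f x * ω x| ≤ 1 := by
  have hzero : ∀ x ∉ K.carrier, f x * ω x = 0 := fun x hx => by
    rw [notMem_support.1 fun h => hx (hs h), zero_mul]
  rw [← setIntegral_eq_integral_of_forall_compl_eq_zero hzero, ← Real.norm_eq_abs]
  have := norm_setIntegral_le_of_norm_le_const_ae' (μ := volume) (f := fun x => f x * ω x)
    K.volume_carrier_ne_top.lt_top (C := (volume K.carrier).toReal⁻¹) (by
      filter_upwards [hb] with x hx _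
      rw [norm_mul, Real.norm_eq_abs, Real.norm_eq_abs]
      simpa using mul_le_mul hx (hω x) (abs_nonneg _) ((abs_nonneg _).trans hx))
  rwa [measureReal_def, inv_mul_cancel₀ K.toReal_volume_carrier_pos.ne'] at this

end Cube

section Atoms

variable {d : ℕ} {θ : ℝ} {𝒬 : Set (Cube d)} {ω : Rd d → ℝ}

lemma isWAtom_normalizedIndicator {Q : Cube d} (hQ : Q ∈ 𝒬) :
    IsWAtom θ 𝒬 ω Q.normalizedIndicator :=
  ⟨Q.integrable_normalizedIndicator, .inr ⟨Q, hQ, rfl⟩⟩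

lemma isWAtom_inv_smul {Q K : Cube d} (hQ : Q ∈ 𝒬) (hK : K.carrier ⊆ Q.starSet θ 2)
    {g : Rd d → ℝ} {C : ℝ} (hC : 0 < C) (hg : Integrable g) (hs : support g ⊆ K.carrier)
    (hb : ∀ᵐ x, |g x| ≤ C * (volume K.carrier).toReal⁻¹) (hω : ∫ x, g x * ω x = 0) :
    IsWAtom θ 𝒬 ω (C⁻¹ • g) := by
  refine ⟨hg.smul C⁻¹, .inl ⟨Q, hQ, K, hK, (support_const_smul_subset _ _).trans hs, ?_, ?_⟩⟩
  · filter_upwards [hb] with x hx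
    rw [Pi.smul_apply, smul_eq_mul, abs_mul, abs_inv, abs_of_pos hC, inv_mul_le_iff₀ hC]
    exact hx
  · have hzero : ∀ x ∉ K.carrier, (C⁻¹ • g) x * ω x = 0 := fun x hx => by
      rw [notMem_support.1 fun h => hx ((support_const_smul_subset _ _).trans hs h), zero_mul]
    rw [setIntegral_eq_integral_of_forall_compl_eq_zero hzero]
    simp only [Pi.smul_apply, smul_eq_mul, mul_assoc, integral_const_mul, hω, mul_zero]

end Atoms

section Decompositions

variable {d : ℕ} {𝒜 : (Rd d → ℝ) → Prop}

lemma isDecomp_pair {a₀ a₁ : Rd d → ℝ} (h₀ : 𝒜 a₀) (h₁ : 𝒜 a₁) (c₀ c₁ : ℝ) :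
    IsDecomp 𝒜 (c₀ • a₀ + c₁ • a₁) (fun j => if j = 0 then c₀ else if j = 1 then c₁ else 0)
      (fun j => if j = 0 then a₀ else a₁) := by
  refine ⟨fun j => by dsimp only; split_ifs <;> assumption, ?_, ?_⟩
  · refine summable_of_ne_finset_zero (s := {0, 1}) fun j hj => ?_
    simp only [Finset.mem_insert, Finset.mem_singleton, not_or] at hj
    simp [hj.1, hj.2]
  · refine tendsto_atTop_of_eventually_const (i₀ := 2) fun N hN => ?_
    have hsum : ∀ x, ∑ j ∈ Finset.range N,
        (if j = 0 then c₀ else if j = 1 then c₁ else 0) * (if j = 0 then a₀ else a₁) x =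
          c₀ * a₀ x + c₁ * a₁ x := fun x => by
      rw [Finset.sum_eq_add 0 1 zero_ne_one (fun j _ hj => by simp [hj.1, hj.2])
        (fun h => absurd (Finset.mem_range.2 (by omega)) h)
        (fun h => absurd (Finset.mem_range.2 (by omega)) h)]
      simp
    simp only [Pi.add_apply, Pi.smul_apply, smul_eq_mul, hsum, sub_self, abs_zero, integral_zero]

lemma H1atNorm_le_of_isDecomp {f : Rd d → ℝ} {lam : ℕ → ℝ} {a : ℕ → Rd d → ℝ}
    (h : IsDecomp 𝒜 f lam a) : H1atNorm 𝒜 f ≤ ∑' j, |lam j| :=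
  csInf_le ⟨0, fun _ ⟨_, _, _, hs⟩ => hs ▸ tsum_nonneg fun _ => abs_nonneg _⟩ ⟨lam, a, h, rfl⟩

lemma memH1at_pair_and_H1atNorm_le {a₀ a₁ : Rd d → ℝ} (h₀ : 𝒜 a₀) (h₁ : 𝒜 a₁) (c₀ c₁ : ℝ) :
    MemH1at 𝒜 (c₀ • a₀ + c₁ • a₁) ∧ H1atNorm 𝒜 (c₀ • a₀ + c₁ • a₁) ≤ |c₀| + |c₁| := by
  have h := isDecomp_pair h₀ h₁ c₀ c₁
  refine ⟨⟨_, _, h⟩, (H1atNorm_le_of_isDecomp h).trans_eq ?_⟩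
  rw [tsum_eq_sum (s := {0, 1}) fun j hj => ?_, Finset.sum_pair zero_ne_one]
  · simp
  · simp only [Finset.mem_insert, Finset.mem_singleton, not_or] at hj
    simp [hj.1, hj.2]

end Decompositions

theorem statement6_general (d : ℕ) (θ : ℝ) (hθ : 0 < θ) (δ : ℝ) (hδ : 0 < δ) :
    ∃ C > (0 : ℝ), ∀ CG : ℝ, 1 ≤ CG → ∀ 𝒬 : Set (Cube d), SatG θ CG 𝒬 →
      ∀ ω : Rd d → ℝ, Measurable ω → (∀ x, δ ≤ ω x ∧ ω x ≤ 1) →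
      ∀ 𝔞 : Rd d → ℝ, Measurable 𝔞 →
      (∃ Q ∈ 𝒬, ∃ K : Cube d, K.carrier ⊆ Q.starSet θ 2 ∧ Q.diam ≤ 4 * K.diam ∧
        Function.support 𝔞 ⊆ K.carrier ∧
        (∀ᵐ x ∂volume, |𝔞 x| ≤ ((volume K.carrier).toReal)⁻¹)) →
      MemH1at (IsWAtom θ 𝒬 ω) 𝔞 ∧ H1atNorm (IsWAtom θ 𝒬 ω) 𝔞 ≤ C := by
  set C₁ : ℝ := (4 ^ d + δ⁻¹) * ((1 + θ) ^ 2) ^ d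
  have hC₁ : 0 < C₁ := by positivity
  refine ⟨C₁ + δ⁻¹, by positivity, ?_⟩
  rintro CG - 𝒬 - ω hω hωδ 𝔞 h𝔞 ⟨Q, hQ, K, hKQ, hdiam, hsupp, hbound⟩
  have hω1 : ∀ x, ‖ω x‖ ≤ 1 := fun x => abs_le.2 ⟨by linarith [hωδ x], (hωδ x).2⟩
  have h𝔞 : Integrable 𝔞 := K.integrable_of_support_subset h𝔞.aestronglyMeasurable hsupp hbound
  set a₂ := Q.normalizedIndicator
  have ha₂ω : δ ≤ ∫ x, a₂ x * ω x :=
    Q.le_integral_normalizedIndicator_mul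
      (Measure.integrableOn_of_bounded Q.volume_carrier_ne_top hω.aestronglyMeasurable
        (.of_forall hω1)) fun x => (hωδ x).1
  set μ := (∫ x, 𝔞 x * ω x) / ∫ x, a₂ x * ω x
  have hμ : |μ| ≤ δ⁻¹ := by
    rw [abs_div, abs_of_pos (hδ.trans_le ha₂ω), ← one_div]
    exact div_le_div₀ zero_le_one (K.abs_integral_mul_le_one hsupp hbound hω1) hδ ha₂ω
  have hcancel : ∫ x, (𝔞 - μ • a₂) x * ω x = 0 :=
    integral_sub_div_smul_mul_eq_zero (h𝔞.mul_bdd hω.aestronglyMeasurable (.of_forall hω1))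
      (Q.integrable_normalizedIndicator.mul_bdd hω.aestronglyMeasurable (.of_forall hω1))
      (hδ.trans_le ha₂ω).ne'
  have hatom : IsWAtom θ 𝒬 ω (C₁⁻¹ • (𝔞 - μ • a₂)) :=
    isWAtom_inv_smul (K := Q.scale ((1 + θ) ^ 2) (by positivity)) hQ subset_rfl hC₁
      (h𝔞.sub (Q.integrable_normalizedIndicator.smul μ))
      (Q.support_sub_smul_normalizedIndicator_subset (one_le_pow₀ (by linarith))
        (hsupp.trans hKQ) μ)
      (hbound.mono fun x hx => Cube.abs_sub_mul_normalizedIndicator_le hdiam _ hx hμ x) hcancel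
  have h := memH1at_pair_and_H1atNorm_le hatom (isWAtom_normalizedIndicator hQ) C₁ μ
  rw [smul_inv_smul₀ hC₁.ne', sub_add_cancel, abs_of_pos hC₁] at h
  exact ⟨h.1, h.2.trans (by linarith)⟩

/-- Remark 1: there is `C > 0`, depending only on `d`, `θ` and `δ`, such that
any function `𝔞` supported in a cube `K ⊆ Q^{**}` with `4 d_K ≥ d_Q` and `‖𝔞‖_∞ ≤ |K|⁻¹`
belongs to `H¹_at(𝒜_{ω,𝒬})` with norm at most `C`. -/
theorem statement6 (d : ℕ) (hd : 3 ≤ d) (θ : ℝ) (hθ : 0 < θ) (δ : ℝ) (hδ : 0 < δ) :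
    ∃ C > (0 : ℝ), ∀ CG : ℝ, 1 ≤ CG → ∀ 𝒬 : Set (Cube d), SatG θ CG 𝒬 →
      ∀ ω : Rd d → ℝ, Measurable ω → (∀ x, δ ≤ ω x ∧ ω x ≤ 1) →
      ∀ 𝔞 : Rd d → ℝ, Measurable 𝔞 →
      (∃ Q ∈ 𝒬, ∃ K : Cube d, K.carrier ⊆ Q.starSet θ 2 ∧ Q.diam ≤ 4 * K.diam ∧
        Function.support 𝔞 ⊆ K.carrier ∧
        (∀ᵐ x ∂volume, |𝔞 x| ≤ ((volume K.carrier).toReal)⁻¹)) →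
      MemH1at (IsWAtom θ 𝒬 ω) 𝔞 ∧ H1atNorm (IsWAtom θ 𝒬 ω) 𝔞 ≤ C :=
  statement6_general d θ hθ δ hδ
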